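/- For split equivalences R, S on Fin (n+m) and a sequence a₀,...,a_{n-1},b₀,...,b_{m-1} of natural numbers ≥ 2 appropriate for both R and S: if F_ab(R) = F_ab(S) then F_2(R) = F_2(S), where F_2 denotes F_ab with all radices equal to 2. -/
import Mathlib


/-- The weight of position `x` for radices `r`: the product of the radices at
positions after `x`. -/
def wgt {k : ℕ} (r : Fin k → ℕ) (x : Fin k) : ℕ :=
  ∏ y ∈ Finset.univ.filter (fun y => x < y), r y

/-- Mixed-radix encoding: `enc r c = Σ_x c x · ∏_{y > x} r y`. -/
def enc {k : ℕ} (r c : Fin k → ℕ) : ℕ := ∑ x, c x * wgt r x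

/-- The Brauerian representation `F_ab(R)` of an equivalence relation `R` on
`Fin (n+m)` with radices `r` : the relation consisting of the pairs `(i,j)`
such that the concatenation `c` of the mixed-radix digit expansions of `i`
(first `n` radices) and `j` (last `m` radices) satisfies `c x = c y` whenever
`(x,y) ∈ R`. -/
def Fab (n m : ℕ) (r : Fin (n + m) → ℕ) (R : Setoid (Fin (n + m))) :
    ℕ → ℕ → Prop := fun i j =>
  ∃ c : Fin (n + m) → ℕ,
    (∀ x, c x < r x) ∧
    (∀ x y, R.r x y → c x = c y) ∧
    i = enc (fun x : Fin n => r (Fin.castAdd m x)) (fun x => c (Fin.castAdd m x)) ∧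
    j = enc (fun x : Fin m => r (Fin.natAdd n x)) (fun x => c (Fin.natAdd n x))

lemma wgt_zero {k : ℕ} (r : Fin (k+1) → ℕ) :
    wgt r 0 = ∏ i : Fin k, r i.succ := by
  rw [wgt, Finset.prod_filter, Fin.prod_univ_succ]
  simp [Fin.succ_pos]

lemma wgt_succ {k : ℕ} (r : Fin (k+1) → ℕ) (i : Fin k) :
    wgt r i.succ = wgt (fun j => r j.succ) i := by
  rw [wgt, wgt, Finset.prod_filter, Finset.prod_filter, Fin.prod_univ_succ]
  simp [Fin.succ_lt_succ_iff, Fin.not_lt_zero]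

lemma enc_succ {k : ℕ} (r c : Fin (k+1) → ℕ) :
    enc r c = c 0 * ∏ i : Fin k, r i.succ
      + enc (fun i => r i.succ) (fun i => c i.succ) := by
  rw [enc, Fin.sum_univ_succ, wgt_zero, enc]
  congr 1
  exact Finset.sum_congr rfl fun i _ => by rw [wgt_succ]

lemma enc_lt {k : ℕ} (r c : Fin k → ℕ) (hc : ∀ x, c x < r x) :
    enc r c < ∏ x, r x := by
  induction k with
  | zero => simp [enc]
  | succ k ih =>
    rw [enc_succ, Fin.prod_univ_succ]
    have h1 : enc (fun i => r i.succ) (fun i => c i.succ) < ∏ i : Fin k, r i.succ := by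
      simpa using ih (fun i => r i.succ) (fun i => c i.succ) (fun i => hc i.succ)
    calc c 0 * ∏ i : Fin k, r i.succ + enc (fun i => r i.succ) (fun i => c i.succ)
        < (c 0 + 1) * ∏ i : Fin k, r i.succ := by
          rw [add_mul, one_mul]; omega
      _ ≤ r 0 * ∏ i : Fin k, r i.succ :=
          Nat.mul_le_mul_right _ (hc 0)

lemma enc_inj {k : ℕ} (r c d : Fin k → ℕ) (hc : ∀ x, c x < r x)
    (hd : ∀ x, d x < r x) (h : enc r c = enc r d) : c = d := by
  induction k with
  | zero => funext x; exact x.elim0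
  | succ k ih =>
    rw [enc_succ, enc_succ] at h
    have hP : 0 < ∏ i : Fin k, r i.succ :=
      Finset.prod_pos fun i _ => lt_of_le_of_lt (Nat.zero_le _) (hc i.succ)
    have h1 : enc (fun i => r i.succ) (fun i => c i.succ) < ∏ i : Fin k, r i.succ := by
      simpa using enc_lt (fun i => r i.succ) (fun i => c i.succ) (fun i => hc i.succ)
    have h2 : enc (fun i => r i.succ) (fun i => d i.succ) < ∏ i : Fin k, r i.succ := by
      simpa using enc_lt (fun i => r i.succ) (fun i => d i.succ) (fun i => hd i.succ)
    have hdiv : ∀ a e : ℕ, e < ∏ i : Fin k, r i.succ →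
        (a * ∏ i : Fin k, r i.succ + e) / ∏ i : Fin k, r i.succ = a := by
      intro a e he
      rw [mul_comm, Nat.mul_add_div hP, Nat.div_eq_of_lt he, add_zero]
    have hc0 : c 0 = d 0 := by
      have h' := congrArg (· / ∏ i : Fin k, r i.succ) h
      rwa [hdiv _ _ h1, hdiv _ _ h2] at h'
    have htail : (fun i : Fin k => c i.succ) = fun i => d i.succ := by
      rw [hc0] at h
      apply ih (fun i => r i.succ) _ _ (fun i => hc i.succ) (fun i => hd i.succ)
      omega
    funext x
    refine Fin.cases hc0 (fun i => ?_) x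
    exact congrFun htail i

lemma key {n m : ℕ} (R S : Setoid (Fin (n + m))) (r : Fin (n + m) → ℕ)
    (hr : ∀ x, 2 ≤ r x)
    (h : ∀ i j, Fab n m r R i j → Fab n m r S i j) :
    ∀ i j, Fab n m (fun _ => 2) R i j → Fab n m (fun _ => 2) S i j := by
  rintro i j ⟨c, hc2, hcR, hi, hj⟩
  have hcr : ∀ x, c x < r x := fun x => lt_of_lt_of_le (hc2 x) (hr x)
  obtain ⟨c', hc', hcS, hi', hj'⟩ :=
    h _ _ ⟨c, hcr, hcR, rfl, rfl⟩
  have hl : (fun x : Fin n => c (Fin.castAdd m x)) = fun x => c' (Fin.castAdd m x) :=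
    enc_inj _ _ _ (fun x => hcr _) (fun x => hc' _) hi'
  have hr2 : (fun x : Fin m => c (Fin.natAdd n x)) = fun x => c' (Fin.natAdd n x) :=
    enc_inj _ _ _ (fun x => hcr _) (fun x => hc' _) hj'
  have hcc : c = c' := by
    funext x
    refine Fin.addCases (fun x => ?_) (fun x => ?_) x
    · exact congrFun hl x
    · exact congrFun hr2 x
  exact ⟨c, hc2, fun x y hxy => by rw [hcc]; exact hcS x y hxy, hi, hj⟩


/-- If the radices `r` (all `≥ 2`) are appropriate for the split equivalences
`R` and `S` and `F_ab(R) = F_ab(S)`, then `F_2(R) = F_2(S)`, where `F_2` is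
the representation with all radices equal to `2`. -/
theorem stmt9 {n m : ℕ} (R S : Setoid (Fin (n + m))) (r : Fin (n + m) → ℕ)
    (hr : ∀ x, 2 ≤ r x)
    (happR : ∀ x y, R.r x y → r x = r y)
    (happS : ∀ x y, S.r x y → r x = r y)
    (h : Fab n m r R = Fab n m r S) :
    Fab n m (fun _ => 2) R = Fab n m (fun _ => 2) S := by
  funext i j
  apply propext
  constructor
  · exact key R S r hr (fun i j => h ▸ id) i j
  · exact key S R r hr (fun i j => h ▸ id) i j
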